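/- For positive integers p and q, the polynomial g_{p,q}(x) = ∑_{i=0}^{min(p,q)} 4^i C(p,i) C(q,i) x^i is real-rooted and g_{p,q} interlaces g_{p,q+1} (their roots alternate). -/

import Mathlib

/-!
The polynomials satisfy the three-term recurrence
`(q+2) g_{p,q+2} = (2q+3 + 4(p-q-1)x) g_{p,q+1} + (q+1)(4x-1) g_{p,q}`,
so at a root `x < 0` of `g_{p,q+1}` the value `g_{p,q+2}(x)` is a negative multiple of `g_{p,q}(x)`.
If the roots `a₀ > a₁ > ⋯` of `g_{p,q+1}` are negative and interlaced by those of `g_{p,q}`, the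
sign of `g_{p,q}(aᵢ)` is `(-1)ⁱ`, hence `g_{p,q+2}` alternates in sign along `0 > a₀ > a₁ > ⋯`
(and at `-∞`), and the intermediate value theorem puts one root of `g_{p,q+2}` in each gap.
Induction on `q`, starting from `g_{p,0} = 1`, then gives the interlacing for every `q`.
-/

open Polynomial Finset

/-- The γ-polynomial `g_{p,q}` of the h*-polynomial of `B_{K_{p,q}}`. -/
noncomputable def gKpq (p q : ℕ) : Polynomial ℝ :=
  ∑ i ∈ Finset.range (min p q + 1), C ((4 : ℝ) ^ i * p.choose i * q.choose i) * X ^ i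

open Filter Asymptotics

theorem List.length_filter_lt_eq_of_getElem {α : Type*} [LinearOrder α] {l : List α} {x : α}
    {i : ℕ} (hi : i ≤ l.length)
    (hlt : ∀ j (hj : j < l.length), j < i → x < l[j])
    (hgt : ∀ j (hj : j < l.length), i ≤ j → l[j] < x) :
    (l.filter (x < ·)).length = i := by
  rw [← List.take_append_drop i l, List.filter_append, List.filter_eq_self.2,
    List.filter_eq_nil_iff.2, List.append_nil, List.length_take, min_eq_left hi]
  · intro y hy
    obtain ⟨j, hj, rfl⟩ := List.mem_drop_iff_getElem.1 hy
    simpa [Nat.add_comm] using (hgt (j + i) hj (by omega)).le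
  · intro y hy
    obtain ⟨j, hj, rfl⟩ := List.mem_take_iff_getElem.1 hy
    simpa using hlt j _ (by omega)

theorem List.pos_neg_one_pow_length_filter_mul_prod_sub {l : List ℝ} {x : ℝ} (hx : x ∉ l) :
    0 < (-1) ^ (l.filter (x < ·)).length * (l.map (x - ·)).prod := by
  induction l with
  | nil => simp
  | cons r l ih =>
    rw [List.mem_cons, not_or] at hx
    have hl := ih hx.2
    rcases lt_or_gt_of_ne hx.1 with h | h
    · have : 0 < r - x := by linarith
      rw [List.filter_cons_of_pos (by simpa using h)]
      simp only [List.length_cons, List.map_cons, List.prod_cons, pow_succ]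
      nlinarith
    · have : 0 < x - r := by linarith
      rw [List.filter_cons_of_neg (by simpa using h.le)]
      simp only [List.map_cons, List.prod_cons]
      nlinarith

theorem List.SortedGT.strictAntiOn_getD {α : Type*} [Preorder α] {l : List α}
    (hl : l.SortedGT) {M : α} (hM : ∀ hne : l ≠ [], M < l.getLast hne) :
    StrictAntiOn (l.getD · M) (Set.Iic l.length) := by
  refine strictAntiOn_Iic_of_succ_lt fun j hj ↦ ?_
  rw [Order.succ_eq_add_one]
  by_cases hj' : j + 1 < l.length
  · rw [List.getD_eq_getElem _ _ hj', List.getD_eq_getElem _ _ (by omega)]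
    exact List.isChain_iff_getElem.1 hl.isChain j hj'
  · rw [List.getD_eq_default _ _ (by omega), List.getD_eq_getElem _ _ hj]
    simpa [List.getLast_eq_getElem, show l.length - 1 = j by omega] using
      hM (List.ne_nil_of_length_pos (by omega))

namespace Polynomial

noncomputable def sortedRoots (f : ℝ[X]) : List ℝ := f.roots.sort (· ≥ ·)

theorem coe_sortedRoots (f : ℝ[X]) : (f.sortedRoots : Multiset ℝ) = f.roots :=
  Multiset.sort_eq _ _

theorem sortedGE_sortedRoots (f : ℝ[X]) : f.sortedRoots.SortedGE :=
  (Multiset.pairwise_sort _ _).sortedGE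

theorem length_sortedRoots (f : ℝ[X]) : f.sortedRoots.length = f.roots.card :=
  Multiset.length_sort _

theorem getElem_sortedRoots_mem_roots (f : ℝ[X]) {i : ℕ} (hi : i < f.sortedRoots.length) :
    f.sortedRoots[i] ∈ f.roots := by
  rw [← coe_sortedRoots]
  exact Multiset.mem_coe.2 (List.getElem_mem hi)

theorem Splits.length_sortedRoots {f : ℝ[X]} (hf : f.Splits) :
    f.sortedRoots.length = f.natDegree := by
  rw [f.length_sortedRoots, splits_iff_card_roots.1 hf]

theorem Splits.pos_neg_one_pow_mul_eval {f : ℝ[X]} (hf : f.Splits) (hlc : 0 < f.leadingCoeff)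
    {x : ℝ} {i : ℕ} (hi : i ≤ f.sortedRoots.length)
    (hlt : ∀ j (hj : j < f.sortedRoots.length), j < i → x < f.sortedRoots[j])
    (hgt : ∀ j (hj : j < f.sortedRoots.length), i ≤ j → f.sortedRoots[j] < x) :
    0 < (-1) ^ i * f.eval x := by
  have hx : x ∉ f.sortedRoots := by
    intro hx
    obtain ⟨j, hj, rfl⟩ := List.mem_iff_getElem.1 hx
    rcases lt_or_ge j i with hji | hij
    · exact (hlt j hj hji).false
    · exact (hgt j hj hij).false
  rw [hf.eval_eq_prod_roots, ← coe_sortedRoots, Multiset.map_coe, Multiset.prod_coe,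
    ← List.length_filter_lt_eq_of_getElem hi hlt hgt, mul_left_comm]
  exact mul_pos hlc (List.pos_neg_one_pow_length_filter_mul_prod_sub hx)

theorem exists_lt_pos_neg_one_pow_mul_eval {f : ℝ[X]} (hlc : 0 < f.leadingCoeff) (y : ℝ) :
    ∃ M < y, 0 < (-1) ^ f.natDegree * f.eval M := by
  have hequiv := (IsEquivalent.refl (u := fun _ : ℝ ↦ (-1 : ℝ) ^ f.natDegree)).mul
    f.isEquivalent_atBot_lead
  have hpos : ∀ᶠ x in atBot, 0 < (-1) ^ f.natDegree * f.eval x := by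
    refine hequiv.eventually_pos ?_
    filter_upwards [eventually_lt_atBot 0] with x hx
    have : 0 < f.leadingCoeff * (-x) ^ f.natDegree := by
      have : 0 < -x := by linarith
      positivity
    rw [neg_pow] at this
    show 0 < (-1) ^ f.natDegree * (f.leadingCoeff * x ^ f.natDegree)
    linarith
  obtain ⟨M, hM, hMy⟩ := (hpos.and (eventually_lt_atBot y)).exists
  exact ⟨M, hMy, hM⟩

theorem splits_and_sortedRoots_mem_Ioo {f : ℝ[X]} {v : ℕ → ℝ}
    (hv : StrictAntiOn v (Set.Iic f.natDegree))
    (hsign : ∀ j ≤ f.natDegree, 0 < (-1) ^ j * f.eval (v j)) :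
    f.Splits ∧ ∀ j (hj : j < f.sortedRoots.length),
      f.sortedRoots[j] ∈ Set.Ioo (v (j + 1)) (v j) := by
  have hf : f ≠ 0 := by
    rintro rfl
    simpa using hsign 0 (Nat.zero_le _)
  have hroot : ∀ j : Fin f.natDegree, ∃ r ∈ Set.Ioo (v (j + 1)) (v j), f.IsRoot r := by
    intro j
    have hvj : v (j + 1) < v j :=
      hv (Set.mem_Iic.2 j.2.le) (Set.mem_Iic.2 j.2) (Nat.lt_succ_self j)
    have hneg : (-1) ^ (j : ℕ) * f.eval (v (j + 1)) < 0 := by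
      have := hsign (j + 1) j.2
      rw [pow_succ] at this
      linarith
    obtain ⟨r, hr, hr0⟩ := intermediate_value_Ioo hvj.le
      (by fun_prop : ContinuousOn (fun x ↦ (-1) ^ (j : ℕ) * f.eval x) _)
      ⟨hneg, hsign j j.2.le⟩
    exact ⟨r, hr, by simpa using hr0⟩
  choose t ht ht_root using hroot
  have ht_anti : StrictAnti t := fun i j hij ↦
    calc t j < v j := (ht j).2
      _ ≤ v (i + 1) :=
        hv.antitoneOn (Set.mem_Iic.2 i.2) (Set.mem_Iic.2 j.2.le) (by simpa using hij)
      _ < t i := (ht i).1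
  have hroots : f.roots = ↑(List.ofFn t) := by
    refine (Multiset.eq_of_le_of_card_le ?_ ?_).symm
    · rw [Multiset.le_iff_subset (Multiset.coe_nodup.2 ht_anti.sortedGT_ofFn.nodup)]
      intro x hx
      obtain ⟨j, rfl⟩ := List.mem_ofFn.1 (Multiset.mem_coe.1 hx)
      exact (mem_roots hf).2 (ht_root j)
    · simpa using card_roots' f
  have hsorted : f.sortedRoots = List.ofFn t := by
    rw [sortedRoots, hroots, Multiset.coe_sort]
    exact List.mergeSort_eq_self _ ht_anti.sortedGT_ofFn.sortedGE.pairwise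
  refine ⟨splits_iff_card_roots.2 (by simp [hroots]), fun j hj ↦ ?_⟩
  simp only [hsorted, List.getElem_ofFn]
  exact ht ⟨j, by simpa [hsorted] using hj⟩

end Polynomial

/-- `StrictInterlace b a`: `a₀ > b₀ > a₁ > b₁ > ⋯`, with `a` as long as `b` or one longer. -/
def StrictInterlace (b a : List ℝ) : Prop :=
  b.length ≤ a.length ∧ a.length ≤ b.length + 1 ∧
  (∀ i (hb : i < b.length) (ha : i < a.length), b[i] < a[i]) ∧
  (∀ i (ha : i + 1 < a.length) (hb : i < b.length), a[i + 1] < b[i])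

structure NegInterlacing (f g : ℝ[X]) : Prop where
  splits_left : f.Splits
  splits_right : g.Splits
  roots_neg : ∀ x ∈ g.roots, x < 0
  interlace : StrictInterlace f.sortedRoots g.sortedRoots

namespace NegInterlacing

variable {f g h : ℝ[X]}

theorem getElem_sortedRoots_neg (hfg : NegInterlacing f g) {i : ℕ}
    (hi : i < g.sortedRoots.length) : g.sortedRoots[i] < 0 :=
  hfg.roots_neg _ (g.getElem_sortedRoots_mem_roots hi)

theorem getElem_sortedRoots_succ_lt (hfg : NegInterlacing f g) {i : ℕ}
    (hi : i + 1 < g.sortedRoots.length) : g.sortedRoots[i + 1] < g.sortedRoots[i] := by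
  obtain ⟨-, hlen, hlt, hgt⟩ := hfg.interlace
  exact (hgt i hi (by omega)).trans (hlt i (by omega) (by omega))

theorem sortedGT_zero_cons (hfg : NegInterlacing f g) : (0 :: g.sortedRoots).SortedGT := by
  refine List.sortedGT_iff_isChain.2 (List.isChain_iff_getElem.2 fun i hi ↦ ?_)
  rcases i with _ | i
  · exact hfg.getElem_sortedRoots_neg _
  · exact hfg.getElem_sortedRoots_succ_lt _

theorem pos_neg_one_pow_mul_eval (hfg : NegInterlacing f g) (hf : 0 < f.leadingCoeff) {i : ℕ}
    (hi : i < g.sortedRoots.length) : 0 < (-1) ^ i * f.eval g.sortedRoots[i] := by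
  obtain ⟨-, hlen, hlt, hgt⟩ := hfg.interlace
  refine hfg.splits_left.pos_neg_one_pow_mul_eval hf (by omega) (fun j hj hji ↦ ?_)
    (fun j hj hij ↦ ?_)
  · calc g.sortedRoots[i] ≤ g.sortedRoots[j + 1] :=
          g.sortedGE_sortedRoots.getElem_ge_getElem_of_le (by omega)
      _ < f.sortedRoots[j] := hgt j (by omega) hj
  · calc f.sortedRoots[j] ≤ f.sortedRoots[i] :=
          f.sortedGE_sortedRoots.getElem_ge_getElem_of_le hij
      _ < g.sortedRoots[i] := hlt i (by omega) hi

theorem pos_neg_one_pow_succ_mul_eval (hfg : NegInterlacing f g) (hf : 0 < f.leadingCoeff)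
    (hrec : ∀ x, g.IsRoot x → x < 0 → ∃ c < 0, h.eval x = c * f.eval x) {i : ℕ}
    (hi : i < g.sortedRoots.length) : 0 < (-1) ^ (i + 1) * h.eval g.sortedRoots[i] := by
  obtain ⟨c, hc, hc_eq⟩ := hrec _ (isRoot_of_mem_roots (g.getElem_sortedRoots_mem_roots hi))
    (hfg.getElem_sortedRoots_neg hi)
  have hf_sign := hfg.pos_neg_one_pow_mul_eval hf hi
  rw [hc_eq, pow_succ]
  nlinarith

theorem next (hfg : NegInterlacing f g) (hf : 0 < f.leadingCoeff) (hh : 0 < h.leadingCoeff)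
    (hdeg : g.natDegree ≤ h.natDegree) (hdeg' : h.natDegree ≤ g.natDegree + 1)
    (h0 : 0 < h.eval 0) (hrec : ∀ x, g.IsRoot x → x < 0 → ∃ c < 0, h.eval x = c * f.eval x) :
    NegInterlacing g h := by
  have hlen_g : g.sortedRoots.length = g.natDegree := hfg.splits_right.length_sortedRoots
  obtain ⟨M, hM, hM_sign⟩ :=
    exists_lt_pos_neg_one_pow_mul_eval hh ((0 :: g.sortedRoots).getLast (List.cons_ne_nil _ _))
  -- `h` alternates in sign along the nodes `0 > g.sortedRoots[0] > g.sortedRoots[1] > ⋯ > M`.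
  set v : ℕ → ℝ := fun j ↦ (0 :: g.sortedRoots).getD j M with hv
  have hv_anti : StrictAntiOn v (Set.Iic h.natDegree) :=
    (hfg.sortedGT_zero_cons.strictAntiOn_getD fun _ ↦ hM).mono
      (Set.Iic_subset_Iic.2 (by rw [List.length_cons]; omega))
  have hv_succ : ∀ j (hj : j < g.sortedRoots.length), v (j + 1) = g.sortedRoots[j] :=
    fun j hj ↦ List.getD_eq_getElem _ _ (by simpa using hj)
  have hv_last : v (g.sortedRoots.length + 1) = M := by simp [hv]
  have hsign : ∀ j ≤ h.natDegree, 0 < (-1) ^ j * h.eval (v j) := by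
    rintro (_ | j) hj
    · simpa [hv] using h0
    by_cases hjg : j < g.sortedRoots.length
    · rw [hv_succ j hjg]
      exact hfg.pos_neg_one_pow_succ_mul_eval hf hrec hjg
    · obtain rfl : j = g.sortedRoots.length := by omega
      rwa [hv_last, show g.sortedRoots.length + 1 = h.natDegree by omega]
  obtain ⟨hsplit, hmem⟩ := splits_and_sortedRoots_mem_Ioo hv_anti hsign
  have hlen_h := hsplit.length_sortedRoots
  refine ⟨hfg.splits_right, hsplit, fun x hx ↦ ?_, by omega, by omega,
    fun i hi hc ↦ by simpa [hv_succ i hi] using (hmem i hc).1,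
    fun i hc hi ↦ by simpa [hv_succ i hi] using (hmem (i + 1) hc).2⟩
  rw [← coe_sortedRoots, Multiset.mem_coe] at hx
  obtain ⟨j, hj, rfl⟩ := List.mem_iff_getElem.1 hx
  refine (hmem j hj).2.trans_le ?_
  rcases j with _ | j
  · simp [hv]
  · exact (hv_succ j (by omega) ▸ hfg.getElem_sortedRoots_neg (by omega)).le

end NegInterlacing

theorem coeff_gKpq (p q i : ℕ) : (gKpq p q).coeff i = 4 ^ i * p.choose i * q.choose i := by
  rw [gKpq, finsetSum_coeff]
  simp only [coeff_C_mul_X_pow]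
  rw [Finset.sum_ite_eq]
  split_ifs with hi
  · rfl
  · rw [Finset.mem_range] at hi
    rcases (show p < i ∨ q < i by omega) with h | h <;> simp [Nat.choose_eq_zero_of_lt h]

theorem coeff_gKpq_min_pos (p q : ℕ) : 0 < (gKpq p q).coeff (min p q) := by
  rw [coeff_gKpq]
  have := Nat.choose_pos (min_le_left p q)
  have := Nat.choose_pos (min_le_right p q)
  positivity

theorem natDegree_gKpq (p q : ℕ) : (gKpq p q).natDegree = min p q := by
  refine natDegree_eq_of_le_of_coeff_ne_zero ?_ (coeff_gKpq_min_pos p q).ne'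
  refine natDegree_le_iff_coeff_eq_zero.2 fun i hi ↦ ?_
  rcases (show p < i ∨ q < i by omega) with h | h <;>
    simp [coeff_gKpq, Nat.choose_eq_zero_of_lt h]

theorem leadingCoeff_gKpq_pos (p q : ℕ) : 0 < (gKpq p q).leadingCoeff := by
  rw [leadingCoeff, natDegree_gKpq]
  exact coeff_gKpq_min_pos p q

theorem eval_zero_gKpq (p q : ℕ) : (gKpq p q).eval 0 = 1 := by
  simp [← coeff_zero_eq_eval_zero, coeff_gKpq]

theorem gKpq_zero (p : ℕ) : gKpq p 0 = 1 := by
  simp [gKpq]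

theorem Nat.cast_choose_succ_mul (n k : ℕ) :
    (n.choose (k + 1) : ℝ) * (k + 1) = n.choose k * ((n : ℝ) - k) := by
  rcases le_or_gt k n with h | h
  · have := congrArg (Nat.cast : ℕ → ℝ) (Nat.choose_succ_right_eq n k)
    push_cast [Nat.cast_sub h] at this
    exact this
  · simp [Nat.choose_eq_zero_of_lt h, Nat.choose_eq_zero_of_lt (Nat.lt_succ_of_lt h)]

theorem choose_mul_choose_recurrence (p q k : ℕ) :
    ((q : ℝ) + 2) * p.choose (k + 1) * (q + 2).choose (k + 1) =
      (2 * q + 3) * p.choose (k + 1) * (q + 1).choose (k + 1) +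
        ((p : ℝ) - q - 1) * p.choose k * (q + 1).choose k +
        (q + 1) * p.choose k * q.choose k - (q + 1) * p.choose (k + 1) * q.choose (k + 1) := by
  have hs : ((q + 2).choose (k + 1) : ℝ) = (q + 1).choose k + (q + 1).choose (k + 1) := by
    exact_mod_cast Nat.choose_succ_succ (q + 1) k
  have hu : ((q + 1).choose (k + 1) : ℝ) = q.choose k + q.choose (k + 1) := by
    exact_mod_cast Nat.choose_succ_succ q k
  have hp := Nat.cast_choose_succ_mul p k
  have hv := Nat.cast_choose_succ_mul (q + 1) k
  have hw : ((q : ℝ) + 1) * q.choose k = (q + 1).choose (k + 1) * (k + 1) := by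
    exact_mod_cast Nat.add_one_mul_choose_eq q k
  push_cast at hv
  -- Times `k + 1`: Pascal's rule (`hs`, `hu`) and `hp` reduce the difference of the two sides to
  -- `(p + 1) C(p,k) ((q + 1 - k) C(q+1,k) - (q + 1) C(q,k))`, which vanishes by `hv` and `hw`.
  refine mul_right_cancel₀ (show (k : ℝ) + 1 ≠ 0 by positivity) ?_
  linear_combination ((k : ℝ) + 1) * (q + 2) * p.choose (k + 1) * hs
    - ((k : ℝ) + 1) * (q + 1) * p.choose (k + 1) * hu
    + (((q : ℝ) + 2) * (q + 1).choose k - (q + 1) * q.choose k) * hp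
    - p.choose k * ((p : ℝ) + 1) * hv - p.choose k * ((p : ℝ) + 1) * hw

theorem gKpq_recurrence (p q : ℕ) :
    C ((q : ℝ) + 2) * gKpq p (q + 2) =
      C (2 * (q : ℝ) + 3) * gKpq p (q + 1) + C (4 * ((p : ℝ) - q - 1)) * (X * gKpq p (q + 1)) +
        C (4 * ((q : ℝ) + 1)) * (X * gKpq p q) - C ((q : ℝ) + 1) * gKpq p q := by
  ext (_ | k)
  · simp only [coeff_add, coeff_sub, coeff_C_mul, coeff_X_mul_zero, coeff_gKpq,
      Nat.choose_zero_right]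
    ring
  · simp only [coeff_add, coeff_sub, coeff_C_mul, coeff_X_mul, coeff_gKpq]
    linear_combination (4 : ℝ) ^ (k + 1) * choose_mul_choose_recurrence p q k

theorem NegInterlacing.gKpq_succ {f : ℝ[X]} {p q : ℕ} (hfq : NegInterlacing f (gKpq p q))
    (hf : 0 < f.leadingCoeff)
    (hrec : ∀ x, (gKpq p q).IsRoot x → x < 0 → ∃ c < 0, (gKpq p (q + 1)).eval x = c * f.eval x) :
    NegInterlacing (gKpq p q) (gKpq p (q + 1)) :=
  hfq.next hf (leadingCoeff_gKpq_pos p (q + 1)) (by simp only [natDegree_gKpq]; omega)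
    (by simp only [natDegree_gKpq]; omega) (by simp [eval_zero_gKpq]) hrec

theorem negInterlacing_gKpq (p q : ℕ) : NegInterlacing (gKpq p q) (gKpq p (q + 1)) := by
  induction q with
  | zero =>
    -- `g_{p,0} = 1` has no roots, so `1` serves as its predecessor.
    have h1 : NegInterlacing 1 (gKpq p 0) := by
      rw [gKpq_zero]
      exact ⟨Splits.one, Splits.one, by simp, by simp [StrictInterlace, sortedRoots]⟩
    exact h1.gKpq_succ (by simp) fun x hx ↦ by simp [gKpq_zero] at hx
  | succ q ih =>
    refine ih.gKpq_succ (leadingCoeff_gKpq_pos p q) fun x hx hx0 ↦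
      ⟨(q + 1) * (4 * x - 1) / (q + 2), ?_, ?_⟩
    · have : (q + 1) * (4 * x - 1) < 0 := mul_neg_of_pos_of_neg (by positivity) (by linarith)
      exact div_neg_of_neg_of_pos this (by positivity)
    · have := congrArg (eval x) (gKpq_recurrence p q)
      simp only [eval_add, eval_sub, eval_mul, eval_C, eval_X, hx.eq_zero, mul_zero] at this
      field_simp
      linarith

theorem stmt13_general (p q : ℕ) :
    (Multiset.card (gKpq p q).roots = (gKpq p q).natDegree) ∧
    (Multiset.card (gKpq p (q + 1)).roots = (gKpq p (q + 1)).natDegree) ∧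
    (∀ i (hB : i < ((gKpq p q).roots.sort (· ≥ ·)).length)
        (hA : i < ((gKpq p (q + 1)).roots.sort (· ≥ ·)).length),
        ((gKpq p q).roots.sort (· ≥ ·)).get ⟨i, hB⟩ ≤
          ((gKpq p (q + 1)).roots.sort (· ≥ ·)).get ⟨i, hA⟩) ∧
    (∀ i (hA : i + 1 < ((gKpq p (q + 1)).roots.sort (· ≥ ·)).length)
        (hB : i < ((gKpq p q).roots.sort (· ≥ ·)).length),
        ((gKpq p (q + 1)).roots.sort (· ≥ ·)).get ⟨i + 1, hA⟩ ≤
          ((gKpq p q).roots.sort (· ≥ ·)).get ⟨i, hB⟩) := by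
  obtain ⟨hf, hg, -, -, -, hlt, hgt⟩ := negInterlacing_gKpq p q
  exact ⟨splits_iff_card_roots.1 hf, splits_iff_card_roots.1 hg,
    fun i hB hA ↦ (hlt i hB hA).le, fun i hA hB ↦ (hgt i hA hB).le⟩

/-- `g_{p,q}` and `g_{p,q+1}` are real-rooted and `g_{p,q}` interlaces `g_{p,q+1}`:
listing the roots in weakly decreasing order as `a₁ ≥ a₂ ≥ ⋯` (for `g_{p,q+1}`) and
`b₁ ≥ b₂ ≥ ⋯` (for `g_{p,q}`), one has `a₁ ≥ b₁ ≥ a₂ ≥ b₂ ≥ ⋯`. -/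
theorem stmt13 (p q : ℕ) (hp : 0 < p) (hq : 0 < q) :
    (Multiset.card (gKpq p q).roots = (gKpq p q).natDegree) ∧
    (Multiset.card (gKpq p (q + 1)).roots = (gKpq p (q + 1)).natDegree) ∧
    (∀ i (hB : i < ((gKpq p q).roots.sort (· ≥ ·)).length)
        (hA : i < ((gKpq p (q + 1)).roots.sort (· ≥ ·)).length),
        ((gKpq p q).roots.sort (· ≥ ·)).get ⟨i, hB⟩ ≤
          ((gKpq p (q + 1)).roots.sort (· ≥ ·)).get ⟨i, hA⟩) ∧
    (∀ i (hA : i + 1 < ((gKpq p (q + 1)).roots.sort (· ≥ ·)).length)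
        (hB : i < ((gKpq p q).roots.sort (· ≥ ·)).length),
        ((gKpq p (q + 1)).roots.sort (· ≥ ·)).get ⟨i + 1, hA⟩ ≤
          ((gKpq p q).roots.sort (· ≥ ·)).get ⟨i, hB⟩) :=
  stmt13_general p q
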